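/- arXiv:2004.10000 — 3 statements merged into one kernel-verified Lean document; each statement's English description precedes it below -/
import Mathlib

section
/- Given a compact metric space (X, d), a finitely generated group Γ with word norm ‖·‖ acting on X by homeomorphisms, and t ≥ 1, there exists a largest metric ρ on X satisfying (1) ρ(x,y) ≤ t·d(x,y) for all x,y ∈ X, and (2) ρ(x, γ·x) ≤ ‖γ‖ for all x ∈ X and γ ∈ Γ. -/
/-- The word length of a group element with respect to a generating set `S`. -/
noncomputable def wordLen {G : Type*} [Group G] (S : Finset G) (g : G) : ℕ :=
  sInf {n : ℕ | ∃ l : List G, l.length = n ∧ (∀ s ∈ l, s ∈ S) ∧ l.prod = g}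

/-- `ρ` is a metric (as a real-valued distance function). -/
def IsMetricFun {X : Type*} (ρ : X → X → ℝ) : Prop :=
  (∀ x y, ρ x y = 0 ↔ x = y) ∧ (∀ x y, ρ x y = ρ y x) ∧
    (∀ x y z, ρ x z ≤ ρ x y + ρ y z)

/-! The admissible metrics form a nonempty family (it contains `min d 1`, because every
`γ ≠ 1` has word length at least `1`), and every constraint is an upper bound on a single
value `ρ x y`. The pointwise supremum of the family is therefore again a metric
satisfying the constraints, and it dominates every admissible metric by construction. -/

open Set

lemma min_add_le_min_add_min {a b c : ℝ} (ha : 0 ≤ a) (hb : 0 ≤ b) (hc : 0 ≤ c) :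
    min (a + b) c ≤ min a c + min b c := by
  simp only [min_def]
  split_ifs <;> linarith

section WordLength

variable {G : Type*} [Group G] {S : Finset G}

lemma exists_list_prod_eq_of_closure_eq_top (hgen : Subgroup.closure (S : Set G) = ⊤)
    (hsym : ∀ s ∈ S, s⁻¹ ∈ S) (g : G) : ∃ l : List G, (∀ s ∈ l, s ∈ S) ∧ l.prod = g := by
  have hg : g ∈ (Subgroup.closure (S : Set G)).toSubmonoid := by
    rw [hgen]; trivial
  rw [Subgroup.closure_toSubmonoid] at hg
  have hS : (S : Set G) ∪ (S : Set G)⁻¹ ⊆ S :=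
    union_subset le_rfl fun s hs => by simpa using hsym _ hs
  exact Submonoid.exists_list_of_mem_closure (Submonoid.closure_mono hS hg)

lemma one_le_wordLen (hgen : Subgroup.closure (S : Set G) = ⊤) (hsym : ∀ s ∈ S, s⁻¹ ∈ S)
    {g : G} (hg : g ≠ 1) : 1 ≤ wordLen S g := by
  obtain ⟨l, hlS, hl⟩ := exists_list_prod_eq_of_closure_eq_top hgen hsym g
  refine le_csInf ⟨l.length, l, rfl, hlS, hl⟩ ?_
  rintro n ⟨l', rfl, -, hl'⟩
  refine Nat.one_le_iff_ne_zero.mpr fun h => hg ?_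
  rw [← hl', List.length_eq_zero_iff.mp h, List.prod_nil]

end WordLength

namespace IsMetricFun

variable {X : Type*}

lemma nonneg {ρ : X → X → ℝ} (h : IsMetricFun ρ) (x y : X) : 0 ≤ ρ x y := by
  have := h.2.2 x y x
  rw [(h.1 x x).2 rfl, h.2.1 y x] at this
  linarith

lemma iSup {ι : Type*} [Nonempty ι] {ρ : ι → X → X → ℝ} (hρ : ∀ i, IsMetricFun (ρ i))
    (hbdd : ∀ x y, BddAbove (range fun i => ρ i x y)) :
    IsMetricFun fun x y => ⨆ i, ρ i x y := by
  refine ⟨fun x y => ⟨fun h => ?_, ?_⟩, fun x y => ?_, fun x y z => ?_⟩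
  · obtain ⟨i⟩ := ‹Nonempty ι›
    have hle : ρ i x y ≤ 0 := h ▸ le_ciSup (hbdd x y) i
    exact ((hρ i).1 x y).1 (le_antisymm hle ((hρ i).nonneg x y))
  · rintro rfl
    simp only [fun i => ((hρ i).1 x x).2 rfl, ciSup_const]
  · simp only [fun i => (hρ i).2.1 x y]
  · exact ciSup_le fun i => ((hρ i).2.2 x y z).trans
      (add_le_add (le_ciSup (hbdd x y) i) (le_ciSup (hbdd y z) i))

lemma min_dist_one [MetricSpace X] : IsMetricFun fun x y : X => min (dist x y) 1 := by
  refine ⟨fun x y => ?_, fun x y => congrArg (min · 1) (dist_comm x y), fun x y z => ?_⟩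
  · rw [min_eq_iff]
    constructor
    · rintro (⟨h, -⟩ | ⟨h, -⟩)
      · exact dist_eq_zero.1 h
      · exact absurd h one_ne_zero
    · rintro rfl
      exact Or.inl ⟨dist_self x, by simp⟩
  · exact (min_le_min_right 1 (dist_triangle x y z)).trans
      (min_add_le_min_add_min dist_nonneg dist_nonneg zero_le_one)

end IsMetricFun

section WarpedMetric

variable {X Γ : Type*} [MetricSpace X] [Group Γ] [MulAction Γ X]

def warpAdmissible (S : Finset Γ) (t : ℝ) : Set (X → X → ℝ) :=
  {ρ | IsMetricFun ρ ∧ (∀ x y : X, ρ x y ≤ t * dist x y) ∧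
    ∀ (x : X) (γ : Γ), ρ x (γ • x) ≤ (wordLen S γ : ℝ)}

noncomputable def warpedMetric (S : Finset Γ) (t : ℝ) (x y : X) : ℝ :=
  ⨆ ρ : warpAdmissible (X := X) S t, (ρ : X → X → ℝ) x y

variable {S : Finset Γ} {t : ℝ}

lemma min_dist_one_mem_warpAdmissible (hgen : Subgroup.closure (S : Set Γ) = ⊤)
    (hsym : ∀ s ∈ S, s⁻¹ ∈ S) (ht : 1 ≤ t) :
    (fun x y : X => min (dist x y) 1) ∈ warpAdmissible S t := by
  refine ⟨IsMetricFun.min_dist_one, fun x y => ?_, fun x γ => ?_⟩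
  · calc min (dist x y) 1 ≤ dist x y := min_le_left _ _
      _ ≤ t * dist x y := le_mul_of_one_le_left dist_nonneg ht
  · rcases eq_or_ne γ 1 with rfl | hγ
    · simp
    · exact (min_le_right _ _).trans (by exact_mod_cast one_le_wordLen hgen hsym hγ)

lemma bddAbove_warpAdmissible_apply (x y : X) :
    BddAbove (range fun ρ : warpAdmissible (X := X) S t => (ρ : X → X → ℝ) x y) :=
  ⟨t * dist x y, by rintro _ ⟨ρ, rfl⟩; exact ρ.2.2.1 x y⟩

lemma le_warpedMetric {ρ : X → X → ℝ} (hρ : ρ ∈ warpAdmissible S t) (x y : X) :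
    ρ x y ≤ warpedMetric S t x y :=
  le_ciSup (bddAbove_warpAdmissible_apply x y) ⟨ρ, hρ⟩

lemma warpedMetric_mem_warpAdmissible (hne : (warpAdmissible (X := X) S t).Nonempty) :
    warpedMetric S t ∈ warpAdmissible (X := X) S t := by
  have := hne.to_subtype
  exact ⟨IsMetricFun.iSup (fun ρ => ρ.2.1) bddAbove_warpAdmissible_apply,
    fun x y => ciSup_le fun ρ => ρ.2.2.1 x y, fun x γ => ciSup_le fun ρ => ρ.2.2.2 x γ⟩

end WarpedMetric

theorem warped_metric_exists_general {X Γ : Type*} [MetricSpace X]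
    [Group Γ] [MulAction Γ X]
    (S : Finset Γ) (hgen : Subgroup.closure (S : Set Γ) = ⊤)
    (hsym : ∀ s ∈ S, s⁻¹ ∈ S)
    (t : ℝ) (ht : 1 ≤ t) :
    ∃ ρ : X → X → ℝ, IsMetricFun ρ ∧
      (∀ x y : X, ρ x y ≤ t * dist x y) ∧
      (∀ (x : X) (γ : Γ), ρ x (γ • x) ≤ (wordLen S γ : ℝ)) ∧
      (∀ ρ' : X → X → ℝ, IsMetricFun ρ' →
        (∀ x y : X, ρ' x y ≤ t * dist x y) →
        (∀ (x : X) (γ : Γ), ρ' x (γ • x) ≤ (wordLen S γ : ℝ)) →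
        ∀ x y : X, ρ' x y ≤ ρ x y) := by
  obtain ⟨hmetric, hdist, hword⟩ := warpedMetric_mem_warpAdmissible (X := X)
    ⟨_, min_dist_one_mem_warpAdmissible hgen hsym ht⟩
  exact ⟨warpedMetric S t, hmetric, hdist, hword, fun _ h₁ h₂ h₃ => le_warpedMetric ⟨h₁, h₂, h₃⟩⟩

/-- Existence of the warped metric at level `t`: the largest metric `ρ` with
`ρ ≤ t·d` and `ρ(x, γ·x) ≤ ‖γ‖`. -/
theorem warped_metric_exists {X Γ : Type*} [MetricSpace X] [CompactSpace X]
    [Group Γ] [MulAction Γ X]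
    (hcont : ∀ γ : Γ, Continuous fun x : X => γ • x)
    (S : Finset Γ) (hgen : Subgroup.closure (S : Set Γ) = ⊤)
    (hsym : ∀ s ∈ S, s⁻¹ ∈ S)
    (t : ℝ) (ht : 1 ≤ t) :
    ∃ ρ : X → X → ℝ, IsMetricFun ρ ∧
      (∀ x y : X, ρ x y ≤ t * dist x y) ∧
      (∀ (x : X) (γ : Γ), ρ x (γ • x) ≤ (wordLen S γ : ℝ)) ∧
      (∀ ρ' : X → X → ℝ, IsMetricFun ρ' →
        (∀ x y : X, ρ' x y ≤ t * dist x y) →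
        (∀ (x : X) (γ : Γ), ρ' x (γ • x) ≤ (wordLen S γ : ℝ)) →
        ∀ x y : X, ρ' x y ≤ ρ x y) :=
  warped_metric_exists_general S hgen hsym t ht
end

section
/- Let {X_n} be a sequence of compact metric spaces such that: (a) there is a constant D with diam(X_n) ≤ D for all n, and (b) for all ε > 0 there exists N(ε) such that every X_n contains an ε-net of at most N(ε) points. Then some subsequence of {X_n} converges in the Gromov–Hausdorff metric to a compact metric space. -/
/-!
The classes of the `X n` form a totally bounded subset of the Gromov–Hausdorff space, since their
representatives have uniformly bounded diameter and uniformly bounded `ε`-nets. That space is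
complete, so the closure of this set is compact and some subsequence of classes converges to a
class `p`. Finally, a Gromov–Hausdorff distance below `r` between two compact spaces yields, through
an optimal coupling, a `2r`-isometry between them, which turns the convergence of classes into
`ε_k`-isometries `X (nk k) → p.Rep` with `ε_k → 0`.
-/

open Filter Metric Set GromovHausdorff Topology

theorem GromovHausdorff.nonempty_isometryEquiv_toGHSpace_rep (X : Type*) [MetricSpace X]
    [CompactSpace X] [Nonempty X] : Nonempty (X ≃ᵢ (toGHSpace X).Rep) :=
  toGHSpace_eq_toGHSpace_iff_isometryEquiv.1 (toGHSpace X).toGHSpace_rep.symm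

theorem GromovHausdorff.exists_approx_isometry_of_ghDist_lt (A B : Type*) [MetricSpace A]
    [CompactSpace A] [Nonempty A] [MetricSpace B] [CompactSpace B] [Nonempty B] {r : ℝ}
    (hr : ghDist A B < r) :
    ∃ f : A → B, (∀ p q : A, |dist (f p) (f q) - dist p q| ≤ 2 * r) ∧
      ∀ b : B, ∃ a : A, dist b (f a) ≤ 2 * r := by
  set Φ := optimalGHInjl A B
  set Ψ := optimalGHInjr A B
  have hΦ : Isometry Φ := isometry_optimalGHInjl A B
  have hΨ : Isometry Ψ := isometry_optimalGHInjr A B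
  have hH : hausdorffDist (range Φ) (range Ψ) < r := by rwa [hausdorffDist_optimal]
  have hfin : hausdorffEDist (range Φ) (range Ψ) ≠ ⊤ :=
    hausdorffEDist_ne_top_of_nonempty_of_bounded (range_nonempty _) (range_nonempty _)
      (isCompact_range hΦ.continuous).isBounded (isCompact_range hΨ.continuous).isBounded
  have hsel : ∀ a : A, ∃ b : B, dist (Φ a) (Ψ b) < r := fun a => by
    obtain ⟨_, ⟨b, rfl⟩, hb⟩ := exists_dist_lt_of_hausdorffDist_lt (mem_range_self a) hH hfin
    exact ⟨b, hb⟩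
  choose f hf using hsel
  refine ⟨f, fun p q => ?_, fun b => ?_⟩
  · have h := dist_dist_dist_le (Φ p) (Φ q) (Ψ (f p)) (Ψ (f q))
    rw [hΦ.dist_eq, hΨ.dist_eq, Real.dist_eq, abs_sub_comm] at h
    linarith [hf p, hf q]
  · obtain ⟨_, ⟨a, rfl⟩, ha⟩ := exists_dist_lt_of_hausdorffDist_lt' (mem_range_self b) hH hfin
    refine ⟨a, ?_⟩
    calc dist b (f a) = dist (Ψ b) (Ψ (f a)) := (hΨ.dist_eq _ _).symm
      _ ≤ dist (Φ a) (Ψ b) + dist (Φ a) (Ψ (f a)) := dist_triangle_left _ _ _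
      _ ≤ 2 * r := by linarith [hf a]

theorem GromovHausdorff.totallyBounded_range_toGHSpace {ι : Type*} (X : ι → Type*)
    [∀ i, MetricSpace (X i)] [∀ i, CompactSpace (X i)] [∀ i, Nonempty (X i)] {D : ℝ}
    (hD : ∀ i, diam (univ : Set (X i)) ≤ D) (N : ℝ → ℕ)
    (hnet : ∀ ε : ℝ, 0 < ε → ∀ i, ∃ s : Finset (X i),
      s.card ≤ N ε ∧ ∀ x : X i, ∃ y ∈ s, dist x y ≤ ε) :
    TotallyBounded (range fun i => toGHSpace (X i)) := by
  refine GromovHausdorff.totallyBounded (C := D) (u := fun m : ℕ => 1 / ((m : ℝ) + 1))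
    (K := fun m => N (1 / ((m : ℝ) + 1) / 2)) tendsto_one_div_add_atTop_nhds_zero_nat ?_ ?_
  · rintro _ ⟨i, rfl⟩
    obtain ⟨e⟩ := nonempty_isometryEquiv_toGHSpace_rep (X i)
    rw [← e.diam_univ]
    exact hD i
  · classical
    rintro _ ⟨i, rfl⟩ m
    obtain ⟨e⟩ := nonempty_isometryEquiv_toGHSpace_rep (X i)
    have hu : (0 : ℝ) < 1 / ((m : ℝ) + 1) := by positivity
    obtain ⟨s, hcard, hs⟩ := hnet _ (half_pos hu) i
    refine ⟨s.image e, ?_, fun x _ => ?_⟩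
    · rw [Finset.coe_sort_coe, Cardinal.mk_coe_finset]
      exact_mod_cast Finset.card_image_le.trans hcard
    · obtain ⟨y, hy, hxy⟩ := hs (e.symm x)
      refine mem_iUnion₂.2 ⟨e y, Finset.mem_image_of_mem e hy, ?_⟩
      rw [mem_ball, ← e.symm.dist_eq, e.symm_apply_apply]
      exact hxy.trans_lt (half_lt_self hu)

theorem GromovHausdorff.exists_approx_isometries_of_tendsto_toGHSpace (X : ℕ → Type*)
    [∀ n, MetricSpace (X n)] [∀ n, CompactSpace (X n)] [∀ n, Nonempty (X n)] {p : GHSpace}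
    (hp : Tendsto (fun n => toGHSpace (X n)) atTop (𝓝 p)) :
    ∃ (ε : ℕ → ℝ) (f : ∀ n, X n → p.Rep), Tendsto ε atTop (𝓝 0) ∧ (∀ n, 0 < ε n) ∧
      ∀ n, (∀ x y : X n, |dist (f n x) (f n y) - dist x y| ≤ ε n) ∧
        (∀ z : p.Rep, ∃ x : X n, dist z (f n x) ≤ ε n) := by
  set δ : ℕ → ℝ := fun n => dist (toGHSpace (X n)) p + 1 / ((n : ℝ) + 1)
  have hδ : ∀ n, ghDist (X n) p.Rep < δ n := fun n => by
    rw [ghDist, p.toGHSpace_rep]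
    exact lt_add_of_pos_right _ (by positivity)
  choose f hf using fun n => exists_approx_isometry_of_ghDist_lt _ _ (hδ n)
  refine ⟨fun n => 2 * δ n, f, ?_, fun n => ?_, fun n => hf n⟩
  · simpa [δ] using ((tendsto_iff_dist_tendsto_zero.1 hp).add
      tendsto_one_div_add_atTop_nhds_zero_nat).const_mul 2
  · positivity

/-- Gromov's compactness criterion: a uniformly totally bounded sequence of
compact metric spaces has a subsequence converging in the Gromov–Hausdorff
sense (witnessed by `ε_k`-isometries with `ε_k → 0`) to a compact metric space. -/
theorem uniformly_totally_bounded_subseq_GH_converges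
    (X : ℕ → Type) [∀ n, MetricSpace (X n)] [∀ n, CompactSpace (X n)]
    [∀ n, Nonempty (X n)]
    (D : ℝ) (hD : ∀ n, Metric.diam (Set.univ : Set (X n)) ≤ D)
    (N : ℝ → ℕ)
    (hnet : ∀ ε : ℝ, 0 < ε → ∀ n, ∃ s : Finset (X n),
      s.card ≤ N ε ∧ ∀ x : X n, ∃ y ∈ s, dist x y ≤ ε) :
    ∃ (Y : Type) (_ : MetricSpace Y), CompactSpace Y ∧
      ∃ nk : ℕ → ℕ, StrictMono nk ∧
        ∃ (ε : ℕ → ℝ) (f : ∀ k, X (nk k) → Y),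
          Tendsto ε atTop (nhds 0) ∧ (∀ k, 0 < ε k) ∧
          ∀ k, (∀ p q : X (nk k), |dist (f k p) (f k q) - dist p q| ≤ ε k) ∧
            (∀ y : Y, ∃ p : X (nk k), dist y (f k p) ≤ ε k) := by
  have hcompact : IsCompact (closure (range fun n => toGHSpace (X n))) :=
    (totallyBounded_range_toGHSpace X hD N hnet).closure.isCompact_of_isClosed isClosed_closure
  obtain ⟨p, -, nk, hnk, hconv⟩ :=
    hcompact.tendsto_subseq fun n => subset_closure (mem_range_self n)
  obtain ⟨ε, f, hε, hεpos, hf⟩ :=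
    exists_approx_isometries_of_tendsto_toGHSpace (fun k => X (nk k)) hconv
  exact ⟨p.Rep, inferInstance, inferInstance, nk, hnk, ε, f, hε, hεpos, hf⟩
end

section
/- If groups Γ₁ and Γ₂ are uniformly measured equivalent (UME) and Γ₂ and Γ₃ are uniformly measured equivalent, then Γ₁ and Γ₃ are uniformly measured equivalent, in the following abstract setting: given measured couplings (X, μ) for (Γ₁,Γ₂) and (Y, ν) for (Γ₂,Γ₃) with the uniformity (bounded covering) condition, the space (X × Y)/Γ₂ with the induced measure is a measured coupling of Γ₁ and Γ₃ satisfying the uniformity condition. -/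
open MeasureTheory

/-- Two countable groups are uniformly measured equivalent (UME) if they admit
commuting, measure-preserving, free actions on a measure space with
finite-measure Borel fundamental domains, such that each translate of one
fundamental domain is covered by finitely many translates of the other. -/
def IsUME (G H : Type) [Group G] [Group H] : Prop :=
  ∃ (Z : Type) (_ : MeasurableSpace Z) (μ : Measure Z)
    (a : G → Z → Z) (b : H → Z → Z),
    (∀ g, Measurable (a g)) ∧ (∀ h, Measurable (b h)) ∧
    (∀ g g' z, a (g * g') z = a g (a g' z)) ∧ (∀ z, a 1 z = z) ∧
    (∀ h h' z, b (h * h') z = b h (b h' z)) ∧ (∀ z, b 1 z = z) ∧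
    (∀ g h z, a g (b h z) = b h (a g z)) ∧
    (∀ (g : G) (A : Set Z), MeasurableSet A → μ (a g ⁻¹' A) = μ A) ∧
    (∀ (h : H) (A : Set Z), MeasurableSet A → μ (b h ⁻¹' A) = μ A) ∧
    (∀ g : G, g ≠ 1 → ∀ z, a g z ≠ z) ∧ (∀ h : H, h ≠ 1 → ∀ z, b h z ≠ z) ∧
    ∃ ZG ZH : Set Z, MeasurableSet ZG ∧ MeasurableSet ZH ∧
      μ ZG < ⊤ ∧ μ ZH < ⊤ ∧
      (∀ z : Z, ∃! g : G, a g z ∈ ZG) ∧ (∀ z : Z, ∃! h : H, b h z ∈ ZH) ∧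
      (∀ g : G, ∃ F : Finset H, a g '' ZG ⊆ ⋃ h ∈ F, b h '' ZH) ∧
      (∀ h : H, ∃ F : Finset G, b h '' ZH ⊆ ⋃ g ∈ F, a g '' ZG)

/-! The composed coupling `(X × Y) / Γ₂` is realised on `X × Y` with the measure `μ × ν`
restricted to `X × Y₂`, a fundamental domain of the diagonal `Γ₂`-action. `Γ₁` acts on the first
factor, and `t ∈ Γ₃` acts on the second factor followed by the element of `Γ₂` that brings the
point back to `X × Y₂`, i.e. through the cocycle `σ(t • y) σ(y)⁻¹`, where `σ(y) • y ∈ Y₂`.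
Since the diagonal action has both `X × Y₂` and `X₂ × Y` as fundamental domains, which give the
same measure to invariant sets, this action preserves the measure, and the `Γ₃`-domain
`{(x, y) | τ(x) • y ∈ Y₃}` (with `τ(x) • x ∈ X₂`) has measure `μ X₂ * ν Y₃`. Uniformity transfers
because `σ(y) • x ∈ h • X₂` if and only if `τ(x) • y ∈ h⁻¹ • Y₂`. -/

open Set Function
open scoped Pointwise

def IsStrictFundamentalDomain (G : Type*) {α : Type*} [SMul G α] (s : Set α) : Prop :=
  ∀ x : α, ∃! g : G, g • x ∈ s

namespace IsStrictFundamentalDomain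

section SMul

variable {G α β : Type*} [SMul G α] [SMul G β] {s : Set α}

theorem preimage (hs : IsStrictFundamentalDomain G s) {f : β → α}
    (hf : ∀ (g : G) x, f (g • x) = g • f x) : IsStrictFundamentalDomain G (f ⁻¹' s) := fun x =>
  (existsUnique_congr fun g => by rw [mem_preimage, hf]).mpr (hs (f x))

end SMul

variable {G α β : Type*} [Group G] [MulAction G α] [MulAction G β] {s : Set α}
  (hs : IsStrictFundamentalDomain G s)
include hs

noncomputable def index (x : α) : G := (hs x).exists.choose

theorem index_smul_mem (x : α) : hs.index x • x ∈ s := (hs x).exists.choose_spec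

theorem index_eq_iff {x : α} {g : G} : hs.index x = g ↔ g • x ∈ s :=
  ⟨fun h => h ▸ hs.index_smul_mem x, fun h => (hs x).unique (hs.index_smul_mem x) h⟩

theorem index_eq_one {x : α} (hx : x ∈ s) : hs.index x = 1 :=
  hs.index_eq_iff.mpr (by rwa [one_smul])

theorem index_smul (g : G) (x : α) : hs.index (g • x) = hs.index x * g⁻¹ :=
  hs.index_eq_iff.mpr (by rw [mul_smul, inv_smul_smul]; exact hs.index_smul_mem x)

theorem index_preimage {f : β → α} (hf : ∀ (g : G) x, f (g • x) = g • f x) (x : β) :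
    (hs.preimage hf).index x = hs.index (f x) :=
  (hs.preimage hf).index_eq_iff.mpr (by rw [mem_preimage, hf]; exact hs.index_smul_mem (f x))

theorem index_smul_smul (g : G) (x : α) (y : β) :
    hs.index (g • x) • g • y = hs.index x • y := by
  rw [index_smul, mul_smul, inv_smul_smul]

theorem index_smul_mem_iff (x : α) (A : Set α) :
    hs.index x • x ∈ A ↔ x ∈ ⋃ g : G, g • (A ∩ s) := by
  simp only [mem_iUnion, mem_smul_set_iff_inv_smul_mem]
  refine ⟨fun h => ⟨(hs.index x)⁻¹, by rw [inv_inv]; exact ⟨h, hs.index_smul_mem x⟩⟩, ?_⟩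
  rintro ⟨g, hA, hs'⟩
  rwa [hs.index_eq_iff.mpr hs']

theorem index_smul_mem_smul_iff {u : Set β} (hu : IsStrictFundamentalDomain G u) (x : α) (y : β)
    (h : G) : hs.index x • y ∈ h • u ↔ hu.index y • x ∈ h⁻¹ • s := by
  rw [mem_smul_set_iff_inv_smul_mem, mem_smul_set_iff_inv_smul_mem, inv_inv, ← mul_smul,
    ← mul_smul, ← hu.index_eq_iff, ← hs.index_eq_iff, eq_inv_mul_iff_mul_eq, eq_comm]

theorem measurable_index [MeasurableSpace α] [MeasurableConstSMul G α] [MeasurableSpace G]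
    [Countable G] (hsm : MeasurableSet s) : Measurable hs.index :=
  measurable_to_countable' fun g => by
    convert (measurable_const_smul g) hsm using 1
    ext x
    exact hs.index_eq_iff

end IsStrictFundamentalDomain

theorem Measurable.smul_of_countable {G α β : Type*} [SMul G α] [MeasurableSpace α]
    [MeasurableSpace β] [MeasurableConstSMul G α] [MeasurableSpace G] [Countable G]
    [MeasurableSingletonClass G] {k : β → G} {f : β → α} (hk : Measurable k) (hf : Measurable f) :
    Measurable fun x => k x • f x :=
  (measurable_from_prod_countable_left (f := fun q : β × G => q.2 • f q.1)
    fun g => (measurable_const_smul g).comp hf).comp (measurable_id.prodMk hk)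

namespace Prod

variable {M α β : Type*} [SMul M α] [SMul M β] [MeasurableSpace α] [MeasurableSpace β]

instance instMeasurableConstSMul [MeasurableConstSMul M α] [MeasurableConstSMul M β] :
    MeasurableConstSMul M (α × β) :=
  ⟨fun c => (measurable_const_smul c).prodMap (measurable_const_smul c)⟩

instance instSMulInvariantMeasure [MeasurableConstSMul M α] [MeasurableConstSMul M β]
    {μ : Measure α} {ν : Measure β} [SFinite μ] [SFinite ν] [SMulInvariantMeasure M α μ]
    [SMulInvariantMeasure M β ν] : SMulInvariantMeasure M (α × β) (μ.prod ν) :=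
  ⟨fun c _ hA => ((measurePreserving_smul c μ).prod (measurePreserving_smul c ν)).measure_preimage
    hA.nullMeasurableSet⟩

abbrev mulActionFst (M α β : Type*) [Monoid M] [MulAction M α] : MulAction M (α × β) where
  smul m p := (m • p.1, p.2)
  one_smul p := Prod.ext (one_smul M p.1) rfl
  mul_smul m m' p := Prod.ext (mul_smul m m' p.1) rfl

end Prod

namespace IsStrictFundamentalDomain

variable {G α : Type*} [Group G] [MulAction G α] {s : Set α} (hs : IsStrictFundamentalDomain G s)
  [MeasurableSpace α] {μ : Measure α}
include hs

theorem isFundamentalDomain (hsm : MeasurableSet s) : IsFundamentalDomain G s μ :=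
  .mk' hsm.nullMeasurableSet hs

theorem sigmaFinite [Countable G] [SMulInvariantMeasure G α μ] (hμs : μ s < ⊤) :
    SigmaFinite μ := by
  refine Measure.sigmaFinite_of_countable (countable_range fun g : G => g • s) ?_ ?_
  · rintro _ ⟨g, rfl⟩
    rwa [measure_smul]
  · refine sUnion_eq_univ_iff.mpr fun x => ⟨(hs.index x)⁻¹ • s, ⟨_, rfl⟩, ?_⟩
    exact mem_smul_set_iff_inv_smul_mem.mpr (by rw [inv_inv]; exact hs.index_smul_mem x)

/-- `f ⁻¹' A ∩ s = φ ⁻¹' (⋃ g, g • (A ∩ s)) ∩ s`, and this `G`-invariant set has the same measure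
on the two fundamental domains `s` and `φ ⁻¹' s`. -/
theorem measure_preimage_inter_eq [Countable G] [MeasurableConstSMul G α]
    [SMulInvariantMeasure G α μ]
    (hsm : MeasurableSet s) {φ f : α → α} (hφ : MeasurePreserving φ μ μ)
    (hφ_smul : ∀ (g : G) x, φ (g • x) = g • φ x) (hf : ∀ x ∈ s, f x = hs.index (φ x) • φ x)
    {A : Set α} (hA : MeasurableSet A) : μ (f ⁻¹' A ∩ s) = μ (A ∩ s) := by
  set A' := ⋃ g : G, g • (A ∩ s)
  have hA'm : MeasurableSet A' := .iUnion fun g => (hA.inter hsm).const_smul g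
  have hA'_inv : ∀ g : G, (fun x => g • x) ⁻¹' (φ ⁻¹' A') = φ ⁻¹' A' := fun g => by
    ext x
    rw [mem_preimage, mem_preimage, mem_preimage, hφ_smul, ← hs.index_smul_mem_iff,
      ← hs.index_smul_mem_iff, index_smul_smul]
  have hf_pre : f ⁻¹' A ∩ s = φ ⁻¹' A' ∩ s := by
    ext x
    refine and_congr_left fun hx => ?_
    rw [mem_preimage, hf x hx, hs.index_smul_mem_iff]
    rfl
  have hA's : A' ∩ s = A ∩ s := by
    ext x
    refine and_congr_left fun hx => ?_
    rw [← hs.index_smul_mem_iff, hs.index_eq_one hx, one_smul]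
  have hfd : IsFundamentalDomain G s μ := hs.isFundamentalDomain hsm
  calc μ (f ⁻¹' A ∩ s) = μ (φ ⁻¹' A' ∩ φ ⁻¹' s) := by
        rw [hf_pre]
        exact hfd.measure_set_eq (hfd.preimage_of_equiv hφ.quasiMeasurePreserving bijective_id
          fun g x => hφ_smul g x) (hA'm.preimage hφ.measurable) hA'_inv
    _ = μ (A ∩ s) := by
        rw [← preimage_inter, hφ.measure_preimage (hA'm.inter hsm).nullMeasurableSet, hA's]

end IsStrictFundamentalDomain

namespace IsStrictFundamentalDomain

variable {G α β : Type*} [Group G] [MulAction G α] [MulAction G β] {r : Set α} {s : Set β}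

theorem preimage_index_smul_inter_prod_univ (hr : IsStrictFundamentalDomain G r) (t : Set β) :
    (fun p : α × β => hr.index p.1 • p.2) ⁻¹' t ∩ r ×ˢ univ = r ×ˢ t := by
  ext ⟨x, y⟩
  refine ⟨fun ⟨hy, hx, _⟩ => ⟨hx, ?_⟩, fun ⟨hx, hy⟩ => ⟨?_, hx, trivial⟩⟩ <;>
    simpa only [mem_preimage, hr.index_eq_one hx, one_smul] using hy

theorem preimage_index_smul_inter_univ_prod (hs : IsStrictFundamentalDomain G s) (t : Set α) :
    (fun p : α × β => hs.index p.2 • p.1) ⁻¹' t ∩ univ ×ˢ s = t ×ˢ s := by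
  ext ⟨x, y⟩
  refine ⟨fun ⟨hx, _, hy⟩ => ⟨?_, hy⟩, fun ⟨hx, hy⟩ => ⟨?_, trivial, hy⟩⟩ <;>
    simpa only [mem_preimage, hs.index_eq_one hy, one_smul] using hx

variable [MeasurableSpace α] [MeasurableSpace β] [MeasurableConstSMul G α]
  [MeasurableConstSMul G β] [Countable G]

theorem measurable_index_smul (hr : IsStrictFundamentalDomain G r) (hrm : MeasurableSet r) :
    Measurable fun p : α × β => hr.index p.1 • p.2 := by
  let _ : MeasurableSpace G := ⊤
  exact ((hr.measurable_index hrm).comp measurable_fst).smul_of_countable measurable_snd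

/-- The set is invariant under the diagonal action, so its measure can be computed on the
fundamental domain `r ×ˢ univ` instead of `univ ×ˢ s`. -/
theorem measure_preimage_index_smul_inter_univ_prod (hr : IsStrictFundamentalDomain G r)
    (hs : IsStrictFundamentalDomain G s) (hrm : MeasurableSet r) (hsm : MeasurableSet s)
    {μ : Measure α} {ν : Measure β} [SFinite μ] [SFinite ν] [SMulInvariantMeasure G α μ]
    [SMulInvariantMeasure G β ν] {t : Set β} (ht : MeasurableSet t) :
    μ.prod ν ((fun p : α × β => hr.index p.1 • p.2) ⁻¹' t ∩ univ ×ˢ s) = μ r * ν t := by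
  have hU := hs.preimage (f := Prod.snd (α := α)) fun _ _ => rfl
  have hV := hr.preimage (f := Prod.fst (β := β)) fun _ _ => rfl
  rw [univ_prod, (hU.isFundamentalDomain (hsm.preimage measurable_snd)).measure_set_eq
    (hV.isFundamentalDomain (hrm.preimage measurable_fst))
    ((hr.measurable_index_smul hrm) ht) fun g => ?_, ← prod_univ,
    preimage_index_smul_inter_prod_univ, Measure.prod_prod]
  ext p
  exact Iff.of_eq (congrArg (· ∈ t) (hr.index_smul_smul g p.1 p.2))

end IsStrictFundamentalDomain

namespace IsStrictFundamentalDomain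

variable {G K α β : Type*} [Group G] [Group K] [MulAction G α] [MulAction G β] [MulAction K β]
  {s : Set β} (hs : IsStrictFundamentalDomain G s)
include hs

noncomputable def cocycle (k : K) (y : β) : G := hs.index (k • y) * (hs.index y)⁻¹

theorem cocycle_smul [SMulCommClass G K β] (g : G) (k : K) (y : β) :
    hs.cocycle k (g • y) = hs.cocycle k y := by
  simp only [cocycle, ← smul_comm g k, index_smul, mul_inv_rev, inv_inv, mul_assoc,
    inv_mul_cancel_left]

theorem cocycle_mul (k k' : K) (y : β) :
    hs.cocycle (k * k') y = hs.cocycle k (k' • y) * hs.cocycle k' y := by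
  simp only [cocycle, mul_smul, mul_assoc, inv_mul_cancel_left]

theorem cocycle_one (y : β) : hs.cocycle (1 : K) y = 1 := by
  rw [cocycle, one_smul, mul_inv_cancel]

theorem cocycle_of_mem {y : β} (hy : y ∈ s) (k : K) : hs.cocycle k y = hs.index (k • y) := by
  rw [cocycle, hs.index_eq_one hy, inv_one, mul_one]

/-- On `univ ×ˢ s`, which is a fundamental domain for the diagonal action of `G`, this is the
action of `K` on `(α × β) / G` carried over to that fundamental domain. -/
noncomputable def twistedSMul (k : K) (p : α × β) : α × β := hs.cocycle k p.2 • (p.1, k • p.2)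

theorem twistedSMul_one (p : α × β) : hs.twistedSMul (1 : K) p = p := by
  rw [twistedSMul, cocycle_one, one_smul, one_smul]

theorem twistedSMul_mul [SMulCommClass G K β] (k k' : K) (p : α × β) :
    hs.twistedSMul (k * k') p = hs.twistedSMul k (hs.twistedSMul k' p) := by
  simp only [twistedSMul, Prod.smul_mk, cocycle_smul, cocycle_mul, mul_smul, smul_comm _ k]

variable (α) in
noncomputable abbrev twistedMulAction [SMulCommClass G K β] : MulAction K (α × β) where
  smul := hs.twistedSMul
  one_smul := hs.twistedSMul_one
  mul_smul := hs.twistedSMul_mul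

theorem twistedSMul_ne_self (hG : ∀ g : G, g ≠ 1 → ∀ x : α, g • x ≠ x)
    (hK : ∀ k : K, k ≠ 1 → ∀ y : β, k • y ≠ y) {k : K} (hk : k ≠ 1) (p : α × β) :
    hs.twistedSMul k p ≠ p := by
  intro hp
  by_cases hc : hs.cocycle k p.2 = 1
  · refine hK k hk p.2 ?_
    simpa [twistedSMul, hc] using congrArg Prod.snd hp
  · exact hG _ hc p.1 (congrArg Prod.fst hp)

theorem twistedSMul_fst_smul {L : Type*} [SMul L α] [SMulCommClass L G α] (l : L) (k : K)
    (p : α × β) : hs.twistedSMul k (l • p.1, p.2) =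
      (l • (hs.twistedSMul k p).1, (hs.twistedSMul k p).2) := by
  simp only [twistedSMul, Prod.smul_mk, smul_comm l]

theorem index_fst_smul_snd_twistedSMul [SMulCommClass G K β] {r : Set α}
    (hr : IsStrictFundamentalDomain G r) (k : K) (p : α × β) : hr.index (hs.twistedSMul k p).1 • (hs.twistedSMul k p).2 =
      k • (hr.index p.1 • p.2) := by
  rw [twistedSMul, Prod.smul_fst, Prod.smul_snd, index_smul_smul, smul_comm _ k]

variable [MeasurableSpace α] [MeasurableSpace β] [MeasurableConstSMul G α]
  [MeasurableConstSMul G β] [MeasurableConstSMul K β] [Countable G]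

theorem measurable_twistedSMul (hsm : MeasurableSet s) (k : K) :
    Measurable (hs.twistedSMul (α := α) k) := by
  let _ : MeasurableSpace G := ⊤
  have hc : Measurable (hs.cocycle k) :=
    ((hs.measurable_index hsm).comp (measurable_const_smul k)).mul
      (hs.measurable_index hsm).inv
  exact (hc.comp measurable_snd).smul_of_countable
    (measurable_fst.prodMk ((measurable_const_smul k).comp measurable_snd))

theorem measurePreserving_twistedSMul [SMulCommClass G K β] {μ : Measure α} {ν : Measure β}
    [SFinite μ] [SFinite ν] [SMulInvariantMeasure G α μ] [SMulInvariantMeasure G β ν] [SMulInvariantMeasure K β ν]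
    (hsm : MeasurableSet s) (k : K) :
    MeasurePreserving (hs.twistedSMul k) ((μ.prod ν).restrict (univ ×ˢ s))
      ((μ.prod ν).restrict (univ ×ˢ s)) := by
  have hsnd : ∀ (g : G) (p : α × β), (g • p).2 = g • p.2 := fun _ _ => rfl
  have hU := hs.preimage hsnd
  have hφ : MeasurePreserving (Prod.map id (k • ·)) (μ.prod ν) (μ.prod ν) :=
    (MeasurePreserving.id μ).prod (measurePreserving_smul k ν)
  refine ⟨hs.measurable_twistedSMul hsm k, Measure.ext fun A hA => ?_⟩
  rw [Measure.map_apply (hs.measurable_twistedSMul hsm k) hA,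
    Measure.restrict_apply (hs.measurable_twistedSMul hsm k hA), Measure.restrict_apply hA,
    univ_prod]
  refine hU.measure_preimage_inter_eq (hsm.preimage measurable_snd) hφ
    (fun g p => Prod.ext rfl (smul_comm g k p.2).symm) (fun p hp => ?_) hA
  rw [hs.index_preimage hsnd, twistedSMul, hs.cocycle_of_mem hp]
  rfl

end IsStrictFundamentalDomain

theorem exists_finset_smul_preimage_subset {G₁ G₂ G₃ W A B : Type*} [Group G₁] [Group G₂]
    [Group G₃] [MulAction G₁ W] [MulAction G₃ W] [MulAction G₁ A] [MulAction G₂ A]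
    [MulAction G₂ B] [MulAction G₃ B] {A₁ A₂ : Set A} {B₂ B₃ : Set B} (Ψ : W →[G₁] A)
    (Φ : W →[G₃] B) (hΨΦ : ∀ w (h : G₂), Ψ w ∈ h • A₂ → Φ w ∈ h⁻¹ • B₂)
    (hA : ∀ g : G₁, ∃ F : Finset G₂, g • A₁ ⊆ ⋃ h ∈ F, h • A₂)
    (hB : ∀ h : G₂, ∃ F : Finset G₃, h • B₂ ⊆ ⋃ t ∈ F, t • B₃) (g : G₁) :
    ∃ F : Finset G₃, g • Ψ ⁻¹' A₁ ⊆ ⋃ t ∈ F, t • Φ ⁻¹' B₃ := by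
  classical
  obtain ⟨F₁, hF₁⟩ := hA g
  choose F₂ hF₂ using hB
  refine ⟨F₁.biUnion fun h => F₂ h⁻¹, fun w hw => ?_⟩
  rw [← Group.preimage_smul_set] at hw
  obtain ⟨h, hh, hw⟩ := mem_iUnion₂.mp (hF₁ hw)
  obtain ⟨t, ht, hw⟩ := mem_iUnion₂.mp (hF₂ h⁻¹ (hΨΦ w h hw))
  refine mem_iUnion₂.mpr ⟨t, Finset.mem_biUnion.mpr ⟨h, hh, ht⟩, ?_⟩
  rwa [← Group.preimage_smul_set]

structure UMECoupling (G H : Type) [Group G] [Group H] where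
  Z : Type
  [instMeasurableSpace : MeasurableSpace Z]
  μ : Measure Z
  [instMulActionLeft : MulAction G Z]
  [instMulActionRight : MulAction H Z]
  [instSMulCommClass : SMulCommClass G H Z]
  [instMeasurableConstSMulLeft : MeasurableConstSMul G Z]
  [instMeasurableConstSMulRight : MeasurableConstSMul H Z]
  [instSMulInvariantMeasureLeft : SMulInvariantMeasure G Z μ]
  [instSMulInvariantMeasureRight : SMulInvariantMeasure H Z μ]
  smul_ne_self_left : ∀ g : G, g ≠ 1 → ∀ z : Z, g • z ≠ z
  smul_ne_self_right : ∀ h : H, h ≠ 1 → ∀ z : Z, h • z ≠ z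
  domLeft : Set Z
  domRight : Set Z
  measurableSet_domLeft : MeasurableSet domLeft
  measurableSet_domRight : MeasurableSet domRight
  measure_domLeft_lt_top : μ domLeft < ⊤
  measure_domRight_lt_top : μ domRight < ⊤
  isStrictFundamentalDomain_left : IsStrictFundamentalDomain G domLeft
  isStrictFundamentalDomain_right : IsStrictFundamentalDomain H domRight
  exists_finset_smul_domLeft_subset : ∀ g : G, ∃ F : Finset H, g • domLeft ⊆ ⋃ h ∈ F, h • domRight
  exists_finset_smul_domRight_subset :
    ∀ h : H, ∃ F : Finset G, h • domRight ⊆ ⋃ g ∈ F, g • domLeft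

attribute [instance] UMECoupling.instMeasurableSpace UMECoupling.instMulActionLeft
  UMECoupling.instMulActionRight UMECoupling.instSMulCommClass
  UMECoupling.instMeasurableConstSMulLeft UMECoupling.instMeasurableConstSMulRight
  UMECoupling.instSMulInvariantMeasureLeft UMECoupling.instSMulInvariantMeasureRight

theorem IsUME.nonempty_umeCoupling {G H : Type} [Group G] [Group H] (h : IsUME G H) :
    Nonempty (UMECoupling G H) := by
  obtain ⟨Z, _, μ, a, b, ha, hb, ha_mul, ha_one, hb_mul, hb_one, hab, hμa, hμb, ha_free, hb_free,
    ZG, ZH, hZG, hZH, hμZG, hμZH, hZG_dom, hZH_dom, hZG_cover, hZH_cover⟩ := h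
  let _ : MulAction G Z := { smul := a, one_smul := ha_one, mul_smul := ha_mul }
  let _ : MulAction H Z := { smul := b, one_smul := hb_one, mul_smul := hb_mul }
  have : SMulCommClass G H Z := ⟨hab⟩
  have : MeasurableConstSMul G Z := ⟨ha⟩
  have : MeasurableConstSMul H Z := ⟨hb⟩
  have : SMulInvariantMeasure G Z μ := ⟨hμa⟩
  have : SMulInvariantMeasure H Z μ := ⟨hμb⟩
  exact ⟨⟨Z, μ, ha_free, hb_free, ZG, ZH, hZG, hZH, hμZG, hμZH, hZG_dom, hZH_dom, hZG_cover,
    hZH_cover⟩⟩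

namespace UMECoupling

variable {G H : Type} [Group G] [Group H]

theorem isUME (P : UMECoupling G H) : IsUME G H :=
  ⟨P.Z, _, P.μ, (· • ·), (· • ·), measurable_const_smul, measurable_const_smul, mul_smul,
    one_smul G, mul_smul, one_smul H, smul_comm,
    fun g _ hA => SMulInvariantMeasure.measure_preimage_smul g hA,
    fun h _ hA => SMulInvariantMeasure.measure_preimage_smul h hA,
    P.smul_ne_self_left, P.smul_ne_self_right, P.domLeft, P.domRight, P.measurableSet_domLeft,
    P.measurableSet_domRight, P.measure_domLeft_lt_top, P.measure_domRight_lt_top,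
    P.isStrictFundamentalDomain_left, P.isStrictFundamentalDomain_right,
    P.exists_finset_smul_domLeft_subset, P.exists_finset_smul_domRight_subset⟩

theorem sigmaFinite_of_countable_right (P : UMECoupling G H) [Countable H] : SigmaFinite P.μ :=
  P.isStrictFundamentalDomain_right.sigmaFinite P.measure_domRight_lt_top

theorem sigmaFinite_of_countable_left (P : UMECoupling G H) [Countable G] : SigmaFinite P.μ :=
  P.isStrictFundamentalDomain_left.sigmaFinite P.measure_domLeft_lt_top

variable {Γ₁ Γ₂ Γ₃ : Type} [Group Γ₁] [Group Γ₂] [Group Γ₃] (P : UMECoupling Γ₁ Γ₂)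
  (Q : UMECoupling Γ₂ Γ₃)

def CompSpace : Type := P.Z × Q.Z

instance : MeasurableSpace (P.CompSpace Q) := inferInstanceAs (MeasurableSpace (P.Z × Q.Z))

instance : MulAction Γ₁ (P.CompSpace Q) := Prod.mulActionFst Γ₁ P.Z Q.Z

noncomputable instance : MulAction Γ₃ (P.CompSpace Q) :=
  Q.isStrictFundamentalDomain_left.twistedMulAction P.Z

instance : SMulCommClass Γ₁ Γ₃ (P.CompSpace Q) :=
  ⟨fun g t p => (Q.isStrictFundamentalDomain_left.twistedSMul_fst_smul g t p).symm⟩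

noncomputable def compMeasure : Measure (P.CompSpace Q) :=
  (P.μ.prod Q.μ).restrict (univ ×ˢ Q.domLeft)

noncomputable def compToLeft : P.CompSpace Q →[Γ₁] P.Z where
  toFun p := Q.isStrictFundamentalDomain_left.index p.2 • p.1
  map_smul' g p := (smul_comm g _ p.1).symm

noncomputable def compToRight : P.CompSpace Q →[Γ₃] Q.Z where
  toFun p := P.isStrictFundamentalDomain_right.index p.1 • p.2
  map_smul' t p :=
    Q.isStrictFundamentalDomain_left.index_fst_smul_snd_twistedSMul
      P.isStrictFundamentalDomain_right t p

def compDomLeft : Set (P.CompSpace Q) := P.compToLeft Q ⁻¹' P.domLeft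

def compDomRight : Set (P.CompSpace Q) := P.compToRight Q ⁻¹' Q.domRight

instance : MeasurableConstSMul Γ₁ (P.CompSpace Q) :=
  ⟨fun g => (measurable_const_smul g).prodMap (measurable_id (α := Q.Z))⟩

instance [Countable Γ₂] : MeasurableConstSMul Γ₃ (P.CompSpace Q) :=
  ⟨Q.isStrictFundamentalDomain_left.measurable_twistedSMul Q.measurableSet_domLeft⟩

instance [Countable Γ₂] : SMulInvariantMeasure Γ₁ (P.CompSpace Q) (P.compMeasure Q) := by
  have := P.sigmaFinite_of_countable_right
  have := Q.sigmaFinite_of_countable_left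
  refine ⟨fun g A hA => MeasurePreserving.measure_preimage ?_ hA.nullMeasurableSet⟩
  exact ((measurePreserving_smul g P.μ).prod (MeasurePreserving.id Q.μ)).restrict_preimage
    (MeasurableSet.univ.prod Q.measurableSet_domLeft)

instance [Countable Γ₂] : SMulInvariantMeasure Γ₃ (P.CompSpace Q) (P.compMeasure Q) := by
  have := P.sigmaFinite_of_countable_right
  have := Q.sigmaFinite_of_countable_left
  exact ⟨fun t A hA => (Q.isStrictFundamentalDomain_left.measurePreserving_twistedSMul
    Q.measurableSet_domLeft t).measure_preimage hA.nullMeasurableSet⟩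

theorem smul_ne_self_compLeft {g : Γ₁} (hg : g ≠ 1) (p : P.CompSpace Q) : g • p ≠ p :=
  fun hp => P.smul_ne_self_left g hg p.1 (congrArg Prod.fst hp)

theorem smul_ne_self_compRight {t : Γ₃} (ht : t ≠ 1) (p : P.CompSpace Q) : t • p ≠ p :=
  Q.isStrictFundamentalDomain_left.twistedSMul_ne_self P.smul_ne_self_right
    Q.smul_ne_self_right ht p

theorem measurableSet_compDomLeft [Countable Γ₂] : MeasurableSet (P.compDomLeft Q) :=
  ((Q.isStrictFundamentalDomain_left.measurable_index_smul Q.measurableSet_domLeft).comp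
    measurable_swap) P.measurableSet_domLeft

theorem measurableSet_compDomRight [Countable Γ₂] : MeasurableSet (P.compDomRight Q) :=
  (P.isStrictFundamentalDomain_right.measurable_index_smul P.measurableSet_domRight)
    Q.measurableSet_domRight

theorem compMeasure_apply {A : Set (P.CompSpace Q)} (hA : MeasurableSet A) :
    P.compMeasure Q A = P.μ.prod Q.μ (A ∩ univ ×ˢ Q.domLeft) :=
  Measure.restrict_apply hA

theorem compMeasure_compDomLeft [Countable Γ₂] :
    P.compMeasure Q (P.compDomLeft Q) = P.μ P.domLeft * Q.μ Q.domLeft := by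
  have := Q.sigmaFinite_of_countable_left
  rw [compMeasure_apply _ _ (P.measurableSet_compDomLeft Q), ← Measure.prod_prod,
    ← Q.isStrictFundamentalDomain_left.preimage_index_smul_inter_univ_prod P.domLeft]
  rfl

theorem compMeasure_compDomRight [Countable Γ₂] :
    P.compMeasure Q (P.compDomRight Q) = P.μ P.domRight * Q.μ Q.domRight := by
  have := P.sigmaFinite_of_countable_right
  have := Q.sigmaFinite_of_countable_left
  rw [compMeasure_apply _ _ (P.measurableSet_compDomRight Q)]
  exact P.isStrictFundamentalDomain_right.measure_preimage_index_smul_inter_univ_prod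
    Q.isStrictFundamentalDomain_left P.measurableSet_domRight Q.measurableSet_domLeft
    Q.measurableSet_domRight

theorem exists_finset_smul_compDomLeft_subset (g : Γ₁) :
    ∃ F : Finset Γ₃, g • P.compDomLeft Q ⊆ ⋃ t ∈ F, t • P.compDomRight Q :=
  exists_finset_smul_preimage_subset (P.compToLeft Q) (P.compToRight Q)
    (fun p h => (Q.isStrictFundamentalDomain_left.index_smul_mem_smul_iff
      P.isStrictFundamentalDomain_right p.2 p.1 h).mp)
    P.exists_finset_smul_domLeft_subset Q.exists_finset_smul_domLeft_subset g

theorem exists_finset_smul_compDomRight_subset (t : Γ₃) :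
    ∃ F : Finset Γ₁, t • P.compDomRight Q ⊆ ⋃ g ∈ F, g • P.compDomLeft Q :=
  exists_finset_smul_preimage_subset (P.compToRight Q) (P.compToLeft Q)
    (fun p h => (P.isStrictFundamentalDomain_right.index_smul_mem_smul_iff
      Q.isStrictFundamentalDomain_left p.1 p.2 h).mp)
    Q.exists_finset_smul_domRight_subset P.exists_finset_smul_domRight_subset t

noncomputable def comp [Countable Γ₂] : UMECoupling Γ₁ Γ₃ where
  Z := P.CompSpace Q
  μ := P.compMeasure Q
  smul_ne_self_left _ := P.smul_ne_self_compLeft Q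
  smul_ne_self_right _ := P.smul_ne_self_compRight Q
  domLeft := P.compDomLeft Q
  domRight := P.compDomRight Q
  measurableSet_domLeft := P.measurableSet_compDomLeft Q
  measurableSet_domRight := P.measurableSet_compDomRight Q
  measure_domLeft_lt_top := by
    rw [compMeasure_compDomLeft]
    exact ENNReal.mul_lt_top P.measure_domLeft_lt_top Q.measure_domLeft_lt_top
  measure_domRight_lt_top := by
    rw [compMeasure_compDomRight]
    exact ENNReal.mul_lt_top P.measure_domRight_lt_top Q.measure_domRight_lt_top
  isStrictFundamentalDomain_left := P.isStrictFundamentalDomain_left.preimage (map_smul _)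
  isStrictFundamentalDomain_right := Q.isStrictFundamentalDomain_right.preimage (map_smul _)
  exists_finset_smul_domLeft_subset := P.exists_finset_smul_compDomLeft_subset Q
  exists_finset_smul_domRight_subset := P.exists_finset_smul_compDomRight_subset Q

end UMECoupling

theorem isUME_trans_general (Γ₁ Γ₂ Γ₃ : Type) [Group Γ₁] [Group Γ₂] [Group Γ₃]
    [Countable Γ₂]
    (h12 : IsUME Γ₁ Γ₂) (h23 : IsUME Γ₂ Γ₃) : IsUME Γ₁ Γ₃ := by
  obtain ⟨P⟩ := h12.nonempty_umeCoupling
  obtain ⟨Q⟩ := h23.nonempty_umeCoupling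
  exact (P.comp Q).isUME

/-- Uniform measured equivalence is transitive: composing a UME coupling of
`Γ₁, Γ₂` with one of `Γ₂, Γ₃` (via `(X × Y)/Γ₂`) yields a UME coupling of
`Γ₁, Γ₃`. -/
theorem isUME_trans (Γ₁ Γ₂ Γ₃ : Type) [Group Γ₁] [Group Γ₂] [Group Γ₃]
    [Countable Γ₁] [Countable Γ₂] [Countable Γ₃]
    (h12 : IsUME Γ₁ Γ₂) (h23 : IsUME Γ₂ Γ₃) : IsUME Γ₁ Γ₃ :=
  isUME_trans_general Γ₁ Γ₂ Γ₃ h12 h23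
end
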